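/- For each N ∈ ℕ, let L_N be an n×n real Metzler matrix (all off-diagonal entries nonnegative) with all column sums nonpositive, such that every eigenvalue of L_N (viewed as a complex matrix) has strictly negative real part. Fix an index ℓ and a real number b, and suppose that lim_{N→∞} (−N^{2b} · e^⊤·L_N⁻¹·e_ℓ) = 0, where e is the all-ones vector and e_ℓ the ℓ-th standard basis vector. Then for every ε > 0 and every index ℓ', lim_{N→∞} N^b · (exp(N^{−b}·ε·L_N))_{ℓ'ℓ} = 0. -/

import Mathlib

/-!
Write `E s = exp (s • A)` for a Metzler matrix `A` with nonpositive column sums. Shifting `A` by a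
multiple of the identity shows `E s ≥ 0` entrywise, and then the column sum `f s = ∑ i, E s i ℓ`
is nonincreasing (its derivative is `∑ k, (∑ i, A i k) E s k ℓ ≤ 0`) with `f 0 = 1`.
The function `u s = (eᵀ A⁻¹ E s) ℓ` has derivative `f`, so by the mean value theorem
`(t - s) f t ≤ u t - u s`. Since `|u| ≤ C f ≤ C`, this forces `f t ≤ 2C / t → 0`, hence `u → 0`;
as `u` is nondecreasing, `u ≤ 0`, and therefore `t E t ℓ' ℓ ≤ t f t ≤ -u 0 = -eᵀ A⁻¹ e_ℓ`.
Taking `t = N^(-b) ε` bounds `N^b E t ℓ' ℓ` by `-N^(2b) eᵀ (L N)⁻¹ e_ℓ / ε`, which tends to `0`.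
-/

open Matrix Filter NormedSpace Set Topology

namespace Matrix

variable {ι : Type*}

def IsMetzler (A : Matrix ι ι ℝ) : Prop := ∀ i j, i ≠ j → 0 ≤ A i j

theorem IsMetzler.smul {A : Matrix ι ι ℝ} (hA : A.IsMetzler) {t : ℝ} (ht : 0 ≤ t) :
    (t • A).IsMetzler :=
  fun i j hij => mul_nonneg ht (hA i j hij)

variable [Fintype ι]

theorem one_vecMul_apply (M : Matrix ι ι ℝ) (j : ι) : (1 ᵥ* M) j = ∑ i, M i j := by
  simp [vecMul, dotProduct]

theorem abs_vecMul_apply_le (w : ι → ℝ) {M : Matrix ι ι ℝ} {j : ι} (hM : ∀ i, 0 ≤ M i j) :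
    |(w ᵥ* M) j| ≤ (∑ i, |w i|) * ∑ i, M i j := by
  calc |(w ᵥ* M) j| = |∑ i, w i * M i j| := rfl
    _ ≤ ∑ i, |w i * M i j| := Finset.abs_sum_le_sum_abs _ _
    _ = ∑ i, |w i| * M i j := by simp only [abs_mul, abs_of_nonneg (hM _)]
    _ ≤ ∑ i, (∑ k, |w k|) * M i j := by
        gcongr with i
        · exact hM i
        · exact Finset.single_le_sum (fun k _ => abs_nonneg (w k)) (Finset.mem_univ i)
    _ = (∑ i, |w i|) * ∑ i, M i j := Finset.mul_sum _ _ _ |>.symm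

variable [DecidableEq ι]

section LinftyOp

attribute [local instance] Matrix.linftyOpNormedRing Matrix.linftyOpNormedAlgebra

theorem exp_apply_nonneg_of_nonneg {M : Matrix ι ι ℝ} (hM : ∀ i j, 0 ≤ M i j) (i j : ι) :
    0 ≤ exp M i j := by
  have hsum := Pi.hasSum.1 (Pi.hasSum.1 (expSeries_summable' (𝕂 := ℝ) M).hasSum i) j
  rw [congrFun (exp_eq_tsum ℝ) M]
  exact hsum.nonneg fun k => mul_nonneg (by positivity) (pow_apply_nonneg hM k i j)

theorem hasDerivAt_exp_smul_apply (A : Matrix ι ι ℝ) (t : ℝ) (i j : ι) :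
    HasDerivAt (fun s : ℝ => exp (s • A) i j) ((A * exp (t • A)) i j) t :=
  ((ContinuousLinearMap.proj j).comp
    (ContinuousLinearMap.proj (R := ℝ) (φ := fun _ : ι => ι → ℝ) i)).hasFDerivAt.comp_hasDerivAt
      t (hasDerivAt_exp_smul_const' A t)

end LinftyOp

theorem hasDerivAt_vecMul_exp_smul_apply (w : ι → ℝ) (A : Matrix ι ι ℝ) (t : ℝ) (j : ι) :
    HasDerivAt (fun s : ℝ => (w ᵥ* exp (s • A)) j) ((w ᵥ* A ᵥ* exp (t • A)) j) t := by
  rw [vecMul_vecMul]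
  exact HasDerivAt.fun_sum fun i _ => (hasDerivAt_exp_smul_apply A t i j).const_mul (w i)

theorem exp_algebraMap_add (c : ℝ) (A : Matrix ι ι ℝ) :
    exp (algebraMap ℝ _ c + A) = Real.exp c • exp A := by
  rw [Matrix.exp_add_of_commute _ _ (Algebra.commutes c A), algebraMap_eq_diagonal, exp_diagonal,
    Pi.exp_def, smul_eq_diagonal_mul, Real.exp_eq_exp_ℝ]
  rfl

theorem IsMetzler.exp_apply_nonneg {A : Matrix ι ι ℝ} (hA : A.IsMetzler) (i j : ι) :
    0 ≤ exp A i j := by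
  set c := ∑ k, |A k k|
  have hshift : ∀ i j, 0 ≤ (algebraMap ℝ _ c + A) i j := by
    intro i j
    rcases eq_or_ne i j with rfl | hij
    · have : |A i i| ≤ c := Finset.single_le_sum (fun k _ => abs_nonneg (A k k)) (Finset.mem_univ i)
      simp only [add_apply, algebraMap_matrix_apply, if_true, Algebra.algebraMap_self,
        RingHom.id_apply]
      linarith [neg_abs_le (A i i)]
    · simpa [algebraMap_matrix_apply, hij] using hA i j hij
  have hA_eq : A = algebraMap ℝ _ (-c) + (algebraMap ℝ _ c + A) := by
    rw [← add_assoc, ← map_add, neg_add_cancel, map_zero, zero_add]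
  rw [hA_eq, exp_algebraMap_add, smul_apply, smul_eq_mul]
  exact mul_nonneg (Real.exp_nonneg _) (exp_apply_nonneg_of_nonneg hshift i j)

theorem isUnit_det_of_forall_spectrum_re_neg {A : Matrix ι ι ℝ}
    (hA : ∀ μ ∈ spectrum ℂ (A.map (Complex.ofReal : ℝ → ℂ)), μ.re < 0) : IsUnit A.det := by
  have h0 : (0 : ℂ) ∉ spectrum ℂ (A.map (Complex.ofReal : ℝ → ℂ)) := fun h => by
    simpa using hA 0 h
  have hdet : (A.map Complex.ofReal).det = (A.det : ℂ) := (RingHom.map_det Complex.ofRealHom A).symm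
  rw [spectrum.zero_mem_iff, not_not, isUnit_iff_isUnit_det, hdet, isUnit_iff_ne_zero,
    Complex.ofReal_ne_zero] at h0
  exact h0.isUnit

section ColumnSums

variable {A : Matrix ι ι ℝ}

theorem IsMetzler.antitoneOn_colSum_exp_smul (hA : A.IsMetzler) (hcol : ∀ j, ∑ i, A i j ≤ 0)
    (j : ι) :
    AntitoneOn (fun s : ℝ => ∑ i, exp (s • A) i j) (Ici 0) := by
  have hderiv : ∀ t, HasDerivAt (fun s : ℝ => ∑ i, exp (s • A) i j)
      ((1 ᵥ* A ᵥ* exp (t • A)) j) t := fun t => by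
    simpa only [one_vecMul_apply] using hasDerivAt_vecMul_exp_smul_apply 1 A t j
  refine antitoneOn_of_hasDerivWithinAt_nonpos (convex_Ici 0)
    (fun t _ => (hderiv t).continuousAt.continuousWithinAt) (fun t _ => (hderiv t).hasDerivWithinAt)
    fun t ht => ?_
  rw [interior_Ici] at ht
  simp only [vecMul, dotProduct]
  exact Finset.sum_nonpos fun k _ => mul_nonpos_of_nonpos_of_nonneg
    ((one_vecMul_apply A k).trans_le (hcol k)) ((hA.smul ht.le).exp_apply_nonneg k j)

theorem hasDerivAt_vecMul_inv_vecMul_exp_smul_apply (hdet : IsUnit A.det) (t : ℝ) (j : ι) :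
    HasDerivAt (fun s : ℝ => (1 ᵥ* A⁻¹ ᵥ* exp (s • A)) j) (∑ i, exp (t • A) i j) t := by
  have h := hasDerivAt_vecMul_exp_smul_apply (1 ᵥ* A⁻¹) A t j
  rwa [vecMul_vecMul 1 A⁻¹ A, nonsing_inv_mul A hdet, vecMul_one, one_vecMul_apply] at h

theorem IsMetzler.colSum_exp_smul_mul_sub_le (hA : A.IsMetzler) (hcol : ∀ j, ∑ i, A i j ≤ 0)
    (hdet : IsUnit A.det) (j : ι) {s t : ℝ} (hs : 0 ≤ s) (hst : s ≤ t) :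
    (∑ i, exp (t • A) i j) * (t - s) ≤
      (1 ᵥ* A⁻¹ ᵥ* exp (t • A)) j - (1 ᵥ* A⁻¹ ᵥ* exp (s • A)) j := by
  have hderiv := hasDerivAt_vecMul_inv_vecMul_exp_smul_apply hdet (j := j)
  refine (convex_Icc s t).mul_sub_le_image_sub_of_le_deriv
    (fun x _ => (hderiv x).continuousAt.continuousWithinAt)
    (fun x _ => (hderiv x).differentiableAt.differentiableWithinAt) (fun x hx => ?_)
    s (left_mem_Icc.2 hst) t (right_mem_Icc.2 hst) hst
  rw [interior_Icc] at hx
  rw [(hderiv x).deriv]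
  exact hA.antitoneOn_colSum_exp_smul hcol j (hs.trans hx.1.le) (hs.trans hst) hx.2.le

theorem IsMetzler.colSum_exp_smul_le_one (hA : A.IsMetzler) (hcol : ∀ j, ∑ i, A i j ≤ 0)
    (j : ι) {t : ℝ} (ht : 0 ≤ t) : ∑ i, exp (t • A) i j ≤ 1 := by
  have h := hA.antitoneOn_colSum_exp_smul hcol j self_mem_Ici ht ht
  simpa [one_apply] using h

theorem IsMetzler.tendsto_colSum_exp_smul_atTop (hA : A.IsMetzler) (hcol : ∀ j, ∑ i, A i j ≤ 0)
    (hdet : IsUnit A.det) (j : ι) :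
    Tendsto (fun s : ℝ => ∑ i, exp (s • A) i j) atTop (𝓝 0) := by
  set C := ∑ i, |(1 ᵥ* A⁻¹) i|
  have hC : 0 ≤ C := Finset.sum_nonneg fun i _ => abs_nonneg _
  have hbound : ∀ s : ℝ, 0 ≤ s → |(1 ᵥ* A⁻¹ ᵥ* exp (s • A)) j| ≤ C := fun s hs =>
    (abs_vecMul_apply_le _ fun i => (hA.smul hs).exp_apply_nonneg i j).trans
      (mul_le_of_le_one_right hC (hA.colSum_exp_smul_le_one hcol j hs))
  refine tendsto_of_tendsto_of_tendsto_of_le_of_le' tendsto_const_nhds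
    (tendsto_const_nhds.div_atTop tendsto_id : Tendsto (fun s : ℝ => 2 * C / s) atTop (𝓝 0))
    ?_ ?_
  · filter_upwards [eventually_ge_atTop 0] with s hs
    exact Finset.sum_nonneg fun i _ => (hA.smul hs).exp_apply_nonneg i j
  · filter_upwards [eventually_gt_atTop 0] with s hs
    have h := hA.colSum_exp_smul_mul_sub_le hcol hdet j le_rfl hs.le
    rw [sub_zero] at h
    rw [le_div_iff₀ hs]
    linarith [abs_le.1 (hbound s hs.le), abs_le.1 (hbound 0 le_rfl)]

theorem IsMetzler.vecMul_inv_vecMul_exp_smul_apply_nonpos (hA : A.IsMetzler)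
    (hcol : ∀ j, ∑ i, A i j ≤ 0) (hdet : IsUnit A.det) (j : ι) {t : ℝ} (ht : 0 ≤ t) :
    (1 ᵥ* A⁻¹ ᵥ* exp (t • A)) j ≤ 0 := by
  have hlim : Tendsto (fun s : ℝ => (1 ᵥ* A⁻¹ ᵥ* exp (s • A)) j) atTop (𝓝 0) := by
    have hC := (hA.tendsto_colSum_exp_smul_atTop hcol hdet j).const_mul (∑ i, |(1 ᵥ* A⁻¹) i|)
    rw [mul_zero] at hC
    refine squeeze_zero_norm' ?_ hC
    filter_upwards [eventually_ge_atTop 0] with s hs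
    exact abs_vecMul_apply_le _ fun i => (hA.smul hs).exp_apply_nonneg i j
  refine ge_of_tendsto hlim ?_
  filter_upwards [eventually_ge_atTop t] with s hts
  have h := hA.colSum_exp_smul_mul_sub_le hcol hdet j ht hts
  have hnonneg : 0 ≤ (∑ i, exp (s • A) i j) * (s - t) :=
    mul_nonneg (Finset.sum_nonneg fun i _ => (hA.smul (ht.trans hts)).exp_apply_nonneg i j)
      (sub_nonneg.2 hts)
  linarith

theorem IsMetzler.mul_exp_smul_apply_le (hA : A.IsMetzler) (hcol : ∀ j, ∑ i, A i j ≤ 0)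
    (hdet : IsUnit A.det) {t : ℝ} (ht : 0 ≤ t) (i j : ι) :
    t * exp (t • A) i j ≤ -∑ k, A⁻¹ k j := by
  have hentry : exp (t • A) i j ≤ ∑ k, exp (t • A) k j :=
    Finset.single_le_sum (fun k _ => (hA.smul ht).exp_apply_nonneg k j) (Finset.mem_univ i)
  have h := hA.colSum_exp_smul_mul_sub_le hcol hdet j le_rfl ht
  have hu := hA.vecMul_inv_vecMul_exp_smul_apply_nonpos hcol hdet j ht
  rw [zero_smul, exp_zero, vecMul_one, one_vecMul_apply, sub_zero] at h
  linarith [mul_le_mul_of_nonneg_left hentry ht]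

end ColumnSums

end Matrix

/-- Let `L N` be Metzler matrices with nonpositive column sums, all
Hurwitz. Fix an index `ℓ` and `b : ℝ`, and suppose `-N^(2b) * e^⊤ (L N)⁻¹ e_ℓ → 0`.
Then for every `ε > 0` and every index `ℓ'`, `N^b * (exp (N^(-b) * ε • L N)) ℓ' ℓ → 0`. -/
theorem stmt12 {n : ℕ} (L : ℕ → Matrix (Fin n) (Fin n) ℝ)
    (hMetzler : ∀ N, ∀ i j, i ≠ j → 0 ≤ L N i j)
    (hcol : ∀ N, ∀ j, ∑ i, L N i j ≤ 0)
    (hHurwitz : ∀ N, ∀ μ ∈ spectrum ℂ ((L N).map (Complex.ofReal : ℝ → ℂ)), μ.re < 0)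
    (ℓ : Fin n) (b : ℝ)
    (hlim : Tendsto (fun N : ℕ => -((N : ℝ) ^ (2 * b) * ∑ i, (L N)⁻¹ i ℓ))
      atTop (nhds 0)) :
    ∀ ε > (0 : ℝ), ∀ ℓ' : Fin n,
      Tendsto (fun N : ℕ => (N : ℝ) ^ b *
          NormedSpace.exp (((N : ℝ) ^ (-b) * ε) • L N) ℓ' ℓ)
        atTop (nhds 0) := by
  intro ε hε ℓ'
  have hM : ∀ N, (L N).IsMetzler := hMetzler
  refine tendsto_of_tendsto_of_tendsto_of_le_of_le' tendsto_const_nhds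
    (by simpa using hlim.div_const ε) ?_ ?_
  · filter_upwards with N
    exact mul_nonneg (by positivity) (((hM N).smul (by positivity)).exp_apply_nonneg ℓ' ℓ)
  · filter_upwards [eventually_gt_atTop 0] with N hN
    have hN : (0 : ℝ) < N := Nat.cast_pos.2 hN
    have hpow : (N : ℝ) ^ (2 * b) * (N : ℝ) ^ (-b) = (N : ℝ) ^ b := by
      rw [← Real.rpow_add hN]; congr 1; ring
    have hdet := isUnit_det_of_forall_spectrum_re_neg (hHurwitz N)
    set t := (N : ℝ) ^ (-b) * ε with ht
    have key := (hM N).mul_exp_smul_apply_le (hcol N) hdet (by positivity : 0 ≤ t) ℓ' ℓ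
    calc (N : ℝ) ^ b * exp (t • L N) ℓ' ℓ
        = (N : ℝ) ^ (2 * b) * (t * exp (t • L N) ℓ' ℓ) / ε := by
          rw [← hpow, ht]; field_simp
      _ ≤ (N : ℝ) ^ (2 * b) * (-∑ i, (L N)⁻¹ i ℓ) / ε := by gcongr
      _ = -((N : ℝ) ^ (2 * b) * ∑ i, (L N)⁻¹ i ℓ) / ε := by ring
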